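/- Finite-rank resolvent difference on the star graph: let G be a star graph with n half-line edges, Δ_D the Dirichlet Laplacian (decoupled half-lines) and Δ_M a self-adjoint Laplacian determined by vertex matrices (A,B) satisfying rank(A,B) = n and AB* self-adjoint. Then the operator (−Δ_D − i)^{−1} − (−Δ_M − i)^{−1} on L²(G) is a finite-rank operator of rank at most n, and hence is trace class. -/

import Mathlib

open MeasureTheory Complex Set
open scoped ENNReal

noncomputable section

def halfLine : Measure ℝ := volume.restrict (Set.Ioi 0)

/-- The Hilbert space `L²(G) = ⊕_{j=1}^n L²((0,∞))` of a star graph with `n` edges. -/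
abbrev starGraphL2 (n : ℕ) := PiLp 2 fun _ : Fin n => Lp ℂ 2 halfLine

/-- `Δ` is the Laplacian on the star graph with `n` half-line edges and vertex
condition `A f(0) + B f'(0+) = 0`: its graph consists of the pairs `(u, u'')` where
`u` has an `H²` representative on each edge (i.e. `f_j, f_j'` absolutely continuous,
expressed by the fundamental theorem of calculus, with `f_j, f_j', f_j'' ∈ L²`)
satisfying the vertex condition. -/
def IsStarGraphLaplacian (n : ℕ) (A B : Matrix (Fin n) (Fin n) ℂ)
    (Δ : starGraphL2 n →ₗ.[ℂ] starGraphL2 n) : Prop :=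
  ∀ u v : starGraphL2 n, (u, v) ∈ Δ.graph ↔
    ∃ f f' f'' : Fin n → ℝ → ℂ,
      (∀ j, ∀ x : ℝ, f j x = f j 0 + ∫ s in (0:ℝ)..x, f' j s) ∧
      (∀ j, ∀ x : ℝ, f' j x = f' j 0 + ∫ s in (0:ℝ)..x, f'' j s) ∧
      (∀ j, MemLp (f j) 2 halfLine) ∧
      (∀ j, MemLp (f' j) 2 halfLine) ∧
      (∀ j, MemLp (f'' j) 2 halfLine) ∧
      A.mulVec (fun j => f j 0) + B.mulVec (fun j => f' j 0) = 0 ∧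
      (∀ j, (u j : ℝ → ℂ) =ᵐ[halfLine] f j) ∧
      (∀ j, (v j : ℝ → ℂ) =ᵐ[halfLine] f'' j)

/-!
On each edge the difference `w = (R_D - R_M) u` satisfies `w'' = -i w` with `w, w' ∈ L²(0, ∞)`.
Let `μ` be the square root of `-i` with `Re μ < 0`. Then `h = w' - μ w` solves `h' = -μ h`, so
`h = h(0) e^{-μx}`, which is square integrable only if `h(0) = 0`; hence `w' = μ w` and
`w = w(0) e^{μx}`. Thus `R_D - R_M` maps into the span of the `n` functions equal to `e^{μx}` on
one edge and to `0` on the others.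
-/

open Filter Topology

lemma ae_halfLine_pos : ∀ᵐ x ∂halfLine, 0 < x :=
  ae_restrict_mem measurableSet_Ioi

section HalfLine

variable {E : Type*} [NormedAddCommGroup E]

lemma MeasureTheory.MemLp.intervalIntegrable_halfLine {p : ℝ≥0∞} (hp : 1 ≤ p) {f : ℝ → E}
    (hf : MemLp f p halfLine) {x : ℝ} (hx : 0 ≤ x) : IntervalIntegrable f volume 0 x := by
  rw [intervalIntegrable_iff_integrableOn_Ioc_of_le hx]
  have : IsFiniteMeasure (volume.restrict (Ioc (0 : ℝ) x)) := ⟨by simp⟩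
  exact (hf.mono_measure (Measure.restrict_mono Ioc_subset_Ioi_self le_rfl)).integrable hp

variable [NormedSpace ℝ E]

lemma intervalIntegral_congr_halfLine {f g : ℝ → E} (hfg : f =ᵐ[halfLine] g) {x : ℝ}
    (hx : 0 ≤ x) : ∫ s in (0 : ℝ)..x, f s = ∫ s in (0 : ℝ)..x, g s := by
  refine intervalIntegral.integral_congr_ae ?_
  filter_upwards [(ae_restrict_iff' measurableSet_Ioi).mp hfg] with s hs hsx
  exact hs (by rw [uIoc_of_le hx] at hsx; exact hsx.1)

variable {f f' g g' : ℝ → E}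

lemma eq_add_integral_sub
    (hf : ∀ x ∈ Ici (0 : ℝ), f x = f 0 + ∫ s in (0 : ℝ)..x, f' s)
    (hg : ∀ x ∈ Ici (0 : ℝ), g x = g 0 + ∫ s in (0 : ℝ)..x, g' s)
    (hf' : ∀ x ∈ Ici (0 : ℝ), IntervalIntegrable f' volume 0 x)
    (hg' : ∀ x ∈ Ici (0 : ℝ), IntervalIntegrable g' volume 0 x) :
    ∀ x ∈ Ici (0 : ℝ), (f - g) x = (f - g) 0 + ∫ s in (0 : ℝ)..x, (f' - g') s := by
  intro x hx
  simp only [Pi.sub_apply]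
  rw [hf x hx, hg x hx, intervalIntegral.integral_sub (hf' x hx) (hg' x hx)]
  abel

lemma continuousOn_Ici_of_eq_add_integral
    (hf' : ∀ x ∈ Ici (0 : ℝ), IntervalIntegrable f' volume 0 x)
    (hf : ∀ x ∈ Ici (0 : ℝ), f x = f 0 + ∫ s in (0 : ℝ)..x, f' s) :
    ContinuousOn f (Ici 0) := by
  intro x (hx : 0 ≤ x)
  have hprim : ContinuousWithinAt (fun y => ∫ s in (0 : ℝ)..y, f' s) (Icc 0 (x + 1)) x := by
    refine intervalIntegral.continuousWithinAt_primitive (by simp) ?_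
    rw [min_self, max_eq_right (by linarith)]
    exact hf' (x + 1) (show (0 : ℝ) ≤ x + 1 by linarith)
  have hnhds : Icc 0 (x + 1) ∈ 𝓝[Ici 0] x :=
    mem_nhdsWithin.mpr ⟨Iio (x + 1), isOpen_Iio, by simp, fun y ⟨hy, hy0⟩ => ⟨hy0, le_of_lt hy⟩⟩
  exact ((continuousWithinAt_const.add hprim).mono_of_mem_nhdsWithin hnhds).congr hf (hf x hx)

lemma hasDerivWithinAt_Ici_of_eq_add_integral [CompleteSpace E] (hf' : ContinuousOn f' (Ici 0))
    (hf : ∀ x ∈ Ici (0 : ℝ), f x = f 0 + ∫ s in (0 : ℝ)..x, f' s) :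
    ∀ x ∈ Ici (0 : ℝ), HasDerivWithinAt f (f' x) (Ici x) x := by
  intro x (hx : 0 ≤ x)
  have hsub : Ioi x ⊆ Ici 0 := Ioi_subset_Ici_self.trans (Ici_subset_Ici.mpr hx)
  have hint : IntervalIntegrable f' volume 0 x :=
    (hf'.mono (by simpa [uIcc_of_le hx] using Icc_subset_Ici_self)).intervalIntegrable
  have hmeas : StronglyMeasurableAtFilter f' (𝓝[Ioi x] x) :=
    (hf'.stronglyMeasurableAtFilter_nhdsWithin measurableSet_Ici x).filter_mono
      (nhdsWithin_mono x hsub)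
  exact ((intervalIntegral.integral_hasDerivWithinAt_right hint hmeas
    ((hf' x hx).mono hsub)).const_add (f 0)).congr
    (fun y (hy : x ≤ y) => hf y (hx.trans hy)) (hf x hx)

end HalfLine

lemma hasDerivAt_cexp_mul_ofReal (a : ℂ) (t : ℝ) :
    HasDerivAt (fun t : ℝ => cexp (a * t)) (a * cexp (a * t)) t := by
  simpa [mul_comm] using (((hasDerivAt_id t).ofReal_comp).const_mul a).cexp

lemma eq_mul_cexp_of_hasDerivWithinAt {a : ℂ} {y : ℝ → ℂ} (hy : ContinuousOn y (Ici 0))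
    (hy' : ∀ x ∈ Ici (0 : ℝ), HasDerivWithinAt y (a * y x) (Ici x) x) :
    ∀ x ∈ Ici (0 : ℝ), y x = y 0 * cexp (a * x) := by
  intro x (hx : 0 ≤ x)
  set F : ℝ → ℂ := fun t => cexp (-a * t) * y t with hF
  have hFcont : ContinuousOn F (Icc 0 x) :=
    (Continuous.continuousOn (by fun_prop)).mul (hy.mono Icc_subset_Ici_self)
  have hFderiv : ∀ t ∈ Ico 0 x, HasDerivWithinAt F 0 (Ici t) t := fun t ht =>
    ((hasDerivAt_cexp_mul_ofReal (-a) t).hasDerivWithinAt.mul (hy' t ht.1)).congr_deriv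
      (by ring)
  have hFx : F x = y 0 := by
    simpa [hF] using constant_of_has_deriv_right_zero hFcont hFderiv x ⟨hx, le_rfl⟩
  calc y x = cexp (a * x) * F x := by
        rw [hF, ← mul_assoc, ← Complex.exp_add]; simp
    _ = y 0 * cexp (a * x) := by rw [hFx, mul_comm]

lemma memLp_cexp_mul_halfLine {a : ℂ} (ha : a.re < 0) :
    MemLp (fun x : ℝ => cexp (a * x)) 2 halfLine := by
  have hmeas : AEStronglyMeasurable (fun x : ℝ => cexp (a * x)) halfLine :=
    (Continuous.aestronglyMeasurable (by fun_prop))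
  refine (memLp_two_iff_integrable_sq_norm hmeas).mpr ?_
  refine (integrableOn_exp_mul_complex_Ioi (a := 2 * a) (by simp; linarith) 0).norm.congr
    (Eventually.of_forall fun x => ?_)
  simp only [Complex.norm_exp]
  rw [← Real.exp_nat_mul]
  simp [Complex.mul_re]
  ring_nf

lemma eq_zero_of_memLp_mul_cexp_halfLine {a c : ℂ} (ha : 0 < a.re) {p : ℝ≥0∞} (hp0 : p ≠ 0)
    (hp : p ≠ ∞) (h : MemLp (fun x : ℝ => c * cexp (a * x)) p halfLine) : c = 0 := by
  have hconst : MemLp (fun _ : ℝ => c) p halfLine := by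
    refine h.mono aestronglyMeasurable_const ?_
    filter_upwards [ae_halfLine_pos] with x hx
    rw [norm_mul, Complex.norm_exp]
    refine le_mul_of_one_le_right (norm_nonneg c) (Real.one_le_exp ?_)
    simpa using (mul_pos ha hx).le
  refine ((memLp_const_iff hp0 hp).mp hconst).resolve_right ?_
  simp [halfLine]

theorem eq_mul_cexp_of_eq_add_integral {μ : ℂ} (hμ : μ.re < 0) {f f' f'' : ℝ → ℂ}
    (hf : ∀ x ∈ Ici (0 : ℝ), f x = f 0 + ∫ s in (0 : ℝ)..x, f' s)
    (hf' : ∀ x ∈ Ici (0 : ℝ), f' x = f' 0 + ∫ s in (0 : ℝ)..x, f'' s)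
    (hfL2 : MemLp f 2 halfLine) (hf'L2 : MemLp f' 2 halfLine)
    (hode : f'' =ᵐ[halfLine] fun x => μ ^ 2 * f x) :
    ∀ x ∈ Ici (0 : ℝ), f x = f 0 * cexp (μ * x) := by
  have hfc : ContinuousOn f (Ici 0) := continuousOn_Ici_of_eq_add_integral
    (fun x hx => hf'L2.intervalIntegrable_halfLine one_le_two hx) hf
  have hμfc : ContinuousOn (fun x => μ ^ 2 * f x) (Ici 0) := continuousOn_const.mul hfc
  have hf'' : ∀ x ∈ Ici (0 : ℝ), f' x = f' 0 + ∫ s in (0 : ℝ)..x, μ ^ 2 * f s := fun x hx => by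
    rw [hf' x hx, intervalIntegral_congr_halfLine hode hx]
  have hf'c : ContinuousOn f' (Ici 0) := continuousOn_Ici_of_eq_add_integral
    (fun x (hx : 0 ≤ x) =>
      (hμfc.mono (by simp [uIcc_of_le hx, Icc_subset_Ici_self])).intervalIntegrable) hf''
  have hdf := hasDerivWithinAt_Ici_of_eq_add_integral hf'c hf
  have hdf' := hasDerivWithinAt_Ici_of_eq_add_integral hμfc hf''
  have hh : ∀ x ∈ Ici (0 : ℝ), f' x - μ * f x = (f' 0 - μ * f 0) * cexp (-μ * x) :=
    eq_mul_cexp_of_hasDerivWithinAt (hf'c.sub (continuousOn_const.mul hfc)) fun x hx =>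
      ((hdf' x hx).sub ((hdf x hx).const_mul μ)).congr_deriv (by ring)
  have hh0 : f' 0 - μ * f 0 = 0 := by
    refine eq_zero_of_memLp_mul_cexp_halfLine (a := -μ) (by simpa using hμ) two_ne_zero
      ENNReal.ofNat_ne_top ((hf'L2.sub (hfL2.const_mul μ)).ae_eq ?_)
    filter_upwards [ae_halfLine_pos] with x hx
    exact hh x hx.le
  refine eq_mul_cexp_of_hasDerivWithinAt hfc fun x hx => (hdf x hx).congr_deriv ?_
  linear_combination hh x hx + cexp (-μ * x) * hh0

lemma exists_sq_eq_neg_I_and_re_neg : ∃ μ : ℂ, μ ^ 2 = -I ∧ μ.re < 0 := by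
  have hsqrt : ((√2 : ℝ) : ℂ) ^ 2 = 2 := by exact_mod_cast Real.sq_sqrt zero_le_two
  refine ⟨(-1 + I) / (√2 : ℝ), ?_, ?_⟩
  · rw [div_pow, hsqrt]
    linear_combination (1 / 2 : ℂ) * I_sq
  · have : 0 < √2 := by positivity
    simp [Complex.div_re]
    linarith

lemma coeFn_neg_sub_smul_apply {n : ℕ} (u v : starGraphL2 n) (z : ℂ) (j : Fin n) :
    ⇑((-u - z • v) j) =ᵐ[halfLine] fun x => -(u j x) - z * v j x := by
  filter_upwards [Lp.coeFn_sub (-(u j)) (z • v j), Lp.coeFn_neg (u j), Lp.coeFn_smul z (v j)]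
    with x hsub hneg hsmul
  simp only [PiLp.sub_apply, PiLp.neg_apply, PiLp.smul_apply]
  rw [hsub, Pi.sub_apply, hneg, hsmul, Pi.neg_apply, Pi.smul_apply, smul_eq_mul]

theorem exists_sub_apply_eq_smul_of_mem_graph {n : ℕ} {A₁ B₁ A₂ B₂ : Matrix (Fin n) (Fin n) ℂ}
    {Δ₁ Δ₂ : starGraphL2 n →ₗ.[ℂ] starGraphL2 n} (hΔ₁ : IsStarGraphLaplacian n A₁ B₁ Δ₁)
    (hΔ₂ : IsStarGraphLaplacian n A₂ B₂ Δ₂) {z μ : ℂ} (hμ : μ ^ 2 = -z) (hμre : μ.re < 0)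
    {e : Lp ℂ 2 halfLine} (he : e =ᵐ[halfLine] fun x : ℝ => cexp (μ * x))
    {u v₁ v₂ : starGraphL2 n} (h₁ : (v₁, -u - z • v₁) ∈ Δ₁.graph)
    (h₂ : (v₂, -u - z • v₂) ∈ Δ₂.graph) :
    ∃ c : Fin n → ℂ, ∀ j, (v₁ - v₂) j = c j • e := by
  obtain ⟨f₁, f₁', f₁'', hf₁, hf₁', hf₁L2, hf₁'L2, hf₁''L2, -, hv₁, hΔv₁⟩ := (hΔ₁ _ _).mp h₁
  obtain ⟨f₂, f₂', f₂'', hf₂, hf₂', hf₂L2, hf₂'L2, hf₂''L2, -, hv₂, hΔv₂⟩ := (hΔ₂ _ _).mp h₂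
  refine ⟨fun j => f₁ j 0 - f₂ j 0, fun j => ?_⟩
  have hint {g : ℝ → ℂ} (hg : MemLp g 2 halfLine) :
      ∀ x ∈ Ici (0 : ℝ), IntervalIntegrable g volume 0 x := fun x hx =>
    hg.intervalIntegrable_halfLine one_le_two hx
  have hode : (f₁'' j - f₂'' j) =ᵐ[halfLine] fun x => μ ^ 2 * (f₁ j - f₂ j) x := by
    filter_upwards [hΔv₁ j, hΔv₂ j, coeFn_neg_sub_smul_apply u v₁ z j,
      coeFn_neg_sub_smul_apply u v₂ z j, hv₁ j, hv₂ j] with x h₁ h₂ h₃ h₄ h₅ h₆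
    simp only [Pi.sub_apply]
    rw [← h₁, ← h₂, h₃, h₄, ← h₅, ← h₆, hμ]
    ring
  have hexp := eq_mul_cexp_of_eq_add_integral hμre
    (eq_add_integral_sub (fun x _ => hf₁ j x) (fun x _ => hf₂ j x) (hint (hf₁'L2 j))
      (hint (hf₂'L2 j)))
    (eq_add_integral_sub (fun x _ => hf₁' j x) (fun x _ => hf₂' j x) (hint (hf₁''L2 j))
      (hint (hf₂''L2 j)))
    ((hf₁L2 j).sub (hf₂L2 j)) ((hf₁'L2 j).sub (hf₂'L2 j)) hode
  refine Lp.ext ?_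
  filter_upwards [Lp.coeFn_sub (v₁ j) (v₂ j), hv₁ j, hv₂ j, Lp.coeFn_smul (f₁ j 0 - f₂ j 0) e,
    he, ae_halfLine_pos] with x hsub h₁ h₂ hsmul hex hx
  simp only [PiLp.sub_apply]
  rw [hsub, hsmul, Pi.sub_apply, h₁, h₂, Pi.smul_apply, hex, smul_eq_mul]
  exact hexp x hx.le

theorem starGraph_resolvent_difference_finite_rank_general
    (n : ℕ) (A B : Matrix (Fin n) (Fin n) ℂ)
    (ΔD ΔM : starGraphL2 n →ₗ.[ℂ] starGraphL2 n)
    (hΔD : IsStarGraphLaplacian n (1 : Matrix (Fin n) (Fin n) ℂ) 0 ΔD)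
    (hΔM : IsStarGraphLaplacian n A B ΔM)
    (RD RM : starGraphL2 n →L[ℂ] starGraphL2 n)
    (hRD : ∀ u : starGraphL2 n, (RD u, -u - Complex.I • RD u) ∈ ΔD.graph)
    (hRM : ∀ u : starGraphL2 n, (RM u, -u - Complex.I • RM u) ∈ ΔM.graph) :
    Module.rank ℂ (LinearMap.range (RD.toLinearMap - RM.toLinearMap)) ≤ n := by
  obtain ⟨μ, hμ, hμre⟩ := exists_sq_eq_neg_I_and_re_neg
  obtain ⟨e, he⟩ : ∃ e : Lp ℂ 2 halfLine, e =ᵐ[halfLine] fun x : ℝ => cexp (μ * x) :=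
    ⟨_, MemLp.coeFn_toLp (memLp_cexp_mul_halfLine hμre)⟩
  let E : Fin n → starGraphL2 n := fun j => WithLp.toLp 2 (Pi.single j e)
  have hrange : LinearMap.range (RD.toLinearMap - RM.toLinearMap) ≤
      Submodule.span ℂ (Set.range E) := by
    rintro _ ⟨u, rfl⟩
    obtain ⟨c, hc⟩ := exists_sub_apply_eq_smul_of_mem_graph hΔD hΔM hμ hμre he (hRD u) (hRM u)
    have hsum : RD u - RM u = ∑ j, c j • E j := PiLp.ext fun k => by
      simp [E, hc, Pi.single_apply]
    rw [LinearMap.sub_apply, ContinuousLinearMap.coe_coe, ContinuousLinearMap.coe_coe, hsum]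
    exact Submodule.sum_mem _ fun j _ =>
      Submodule.smul_mem _ (c j) (Submodule.subset_span (Set.mem_range_self j))
  calc Module.rank ℂ (LinearMap.range (RD.toLinearMap - RM.toLinearMap))
      ≤ Module.rank ℂ (Submodule.span ℂ (Set.range E)) := Submodule.rank_mono hrange
    _ ≤ Cardinal.mk (Set.range E) := rank_span_le _
    _ ≤ Cardinal.mk (Fin n) := Cardinal.mk_range_le
    _ = n := Cardinal.mk_fin n

/-- Finite-rank resolvent difference on the star graph: if `Δ_D` is the Dirichlet
(decoupled) Laplacian, `Δ_M` the Laplacian with vertex matrices `(A,B)` satisfying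
`rank (A B) = n` and `AB*` self-adjoint, and `R_D, R_M` the resolvents
`(−Δ − i)⁻¹`, then `R_D − R_M` has rank at most `n` (in particular it is finite
rank, hence trace class). -/
theorem starGraph_resolvent_difference_finite_rank
    (n : ℕ) (A B : Matrix (Fin n) (Fin n) ℂ)
    (hrank : (Matrix.of fun i => Sum.elim (A i) (B i) :
      Matrix (Fin n) (Fin n ⊕ Fin n) ℂ).rank = n)
    (hsa : (A * B.conjTranspose).IsHermitian)
    (ΔD ΔM : starGraphL2 n →ₗ.[ℂ] starGraphL2 n)
    (hΔD : IsStarGraphLaplacian n (1 : Matrix (Fin n) (Fin n) ℂ) 0 ΔD)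
    (hΔM : IsStarGraphLaplacian n A B ΔM)
    (RD RM : starGraphL2 n →L[ℂ] starGraphL2 n)
    (hRD : ∀ u : starGraphL2 n, (RD u, -u - Complex.I • RD u) ∈ ΔD.graph)
    (hRM : ∀ u : starGraphL2 n, (RM u, -u - Complex.I • RM u) ∈ ΔM.graph) :
    Module.rank ℂ (LinearMap.range (RD.toLinearMap - RM.toLinearMap)) ≤ n :=
  starGraph_resolvent_difference_finite_rank_general n A B ΔD ΔM hΔD hΔM RD RM hRD hRM
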